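/- arXiv:1601.05685 — 2 statements merged into one kernel-verified Lean document; each statement's English description precedes it below -/
import Mathlib

section
/- Let a, b ∈ (0, ∞) with a ≠ b. Then λ'(a) = λ'(b) if and only if (a − b)²(1 − 9ab) = (3ab + 1)(3a²b² + 6ab − 1). In particular, if a ≠ b and λ'(a) = λ'(b) then 1/9 < ab ≤ γ₀². -/
/-!
Since λ' > 0 on (0, ∞), λ'(a) = λ'(b) iff (λ')² agrees at a and b, i.e. iff
(1 + 3a²)²(b + b³) = (1 + 3b²)²(a + a³). The difference of the two sides factors as (b − a) times
(a − b)²(1 − 9ab) − (3ab + 1)(3a²b² + 6ab − 1). If ab ≤ 1/9, the minuend is ≥ 0 and the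
subtrahend < 0, so where they agree ab > 1/9; then both are negative, which forces
3q² + 6q − 1 < 0 for q = ab, i.e. q < γ₀².
-/

noncomputable section

open Real Set

/-- The dispersion relation λ(x) = √(x + x³). -/
def lam (x : ℝ) : ℝ := Real.sqrt (x + x ^ 3)

/-- γ₀ = √((2√3 − 3)/3). -/
def gamma0 : ℝ := Real.sqrt ((2 * Real.sqrt 3 - 3) / 3)

lemma hasDerivAt_lam {x : ℝ} (hx : 0 < x) :
    HasDerivAt lam ((1 + 3 * x ^ 2) / (2 * √(x + x ^ 3))) x := by
  have h : HasDerivAt (fun y : ℝ => y + y ^ 3) (1 + 3 * x ^ 2) x :=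
    ((hasDerivAt_id' x).add (hasDerivAt_pow 3 x)).congr_deriv (by simp)
  exact h.sqrt (by positivity)

lemma deriv_lam_pos {x : ℝ} (hx : 0 < x) : 0 < deriv lam x := by
  rw [(hasDerivAt_lam hx).deriv]
  have : 0 < x + x ^ 3 := by positivity
  positivity

lemma deriv_lam_sq {x : ℝ} (hx : 0 < x) :
    deriv lam x ^ 2 = (1 + 3 * x ^ 2) ^ 2 / (4 * (x + x ^ 3)) := by
  rw [(hasDerivAt_lam hx).deriv, div_pow, mul_pow, sq_sqrt (by positivity)]
  norm_num

lemma deriv_lam_eq_deriv_lam_iff {a b : ℝ} (ha : 0 < a) (hb : 0 < b) :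
    deriv lam a = deriv lam b ↔
      (1 + 3 * a ^ 2) ^ 2 * (b + b ^ 3) = (1 + 3 * b ^ 2) ^ 2 * (a + a ^ 3) := by
  rw [← pow_left_inj₀ (deriv_lam_pos ha).le (deriv_lam_pos hb).le two_ne_zero,
    deriv_lam_sq ha, deriv_lam_sq hb, div_eq_div_iff (by positivity) (by positivity)]
  constructor <;> intro h <;> linarith

lemma dispersion_cross_sub_factor (a b : ℝ) :
    (1 + 3 * a ^ 2) ^ 2 * (b + b ^ 3) - (1 + 3 * b ^ 2) ^ 2 * (a + a ^ 3) =
      (b - a) * ((a - b) ^ 2 * (1 - 9 * (a * b)) -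
        (3 * (a * b) + 1) * (3 * (a * b) ^ 2 + 6 * (a * b) - 1)) := by
  ring

lemma deriv_lam_eq_deriv_lam_iff_of_ne {a b : ℝ} (ha : 0 < a) (hb : 0 < b) (hab : a ≠ b) :
    deriv lam a = deriv lam b ↔
      (a - b) ^ 2 * (1 - 9 * (a * b)) =
        (3 * (a * b) + 1) * (3 * (a * b) ^ 2 + 6 * (a * b) - 1) := by
  rw [deriv_lam_eq_deriv_lam_iff ha hb, ← sub_eq_zero, dispersion_cross_sub_factor, mul_eq_zero,
    or_iff_right (sub_ne_zero.mpr hab.symm), sub_eq_zero]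

lemma mem_Ioo_of_mul_one_sub_nine_mul_eq {d q : ℝ} (hd : 0 < d) (hq : 0 < q)
    (h : d * (1 - 9 * q) = (3 * q + 1) * (3 * q ^ 2 + 6 * q - 1)) :
    q ∈ Ioo (1 / 9) ((2 * √3 - 3) / 3) := by
  have hlow : 1 / 9 < q := by
    by_contra! hle
    nlinarith [mul_nonneg hd.le (by linarith : (0 : ℝ) ≤ 1 - 9 * q)]
  have hquad : 3 * q ^ 2 + 6 * q - 1 < 0 := by
    have : (3 * q + 1) * (3 * q ^ 2 + 6 * q - 1) < 0 := h ▸ mul_neg_of_pos_of_neg hd (by linarith)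
    exact neg_of_mul_neg_right this (by linarith)
  refine ⟨hlow, ?_⟩
  -- 3q² + 6q − 1 = 3(q + 1)² − 4, whose positive root is 2√3/3 − 1
  nlinarith [sq_sqrt (show (0 : ℝ) ≤ 3 by norm_num), sqrt_nonneg 3,
    sq_nonneg (q + 1 - 2 * √3 / 3)]

lemma gamma0_sq : gamma0 ^ 2 = (2 * √3 - 3) / 3 :=
  sq_sqrt (by nlinarith [sq_sqrt (show (0 : ℝ) ≤ 3 by norm_num), sqrt_nonneg 3])

/-- For a ≠ b in (0, ∞): λ'(a) = λ'(b) iff (a − b)²(1 − 9ab) = (3ab + 1)(3a²b² + 6ab − 1);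
in particular if λ'(a) = λ'(b) then 1/9 < ab ≤ γ₀². -/
theorem stmt4 (a b : ℝ) (ha : 0 < a) (hb : 0 < b) (hab : a ≠ b) :
    (deriv lam a = deriv lam b ↔
      (a - b) ^ 2 * (1 - 9 * (a * b)) =
        (3 * (a * b) + 1) * (3 * (a * b) ^ 2 + 6 * (a * b) - 1)) ∧
    (deriv lam a = deriv lam b → 1 / 9 < a * b ∧ a * b ≤ gamma0 ^ 2) := by
  have hiff := deriv_lam_eq_deriv_lam_iff_of_ne ha hb hab
  refine ⟨hiff, fun h => ?_⟩
  obtain ⟨hlow, hhigh⟩ := mem_Ioo_of_mul_one_sub_nine_mul_eq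
    (by positivity [sub_ne_zero.mpr hab]) (mul_pos ha hb) (hiff.mp h)
  exact ⟨hlow, gamma0_sq ▸ hhigh.le⟩

end
end

section
/- Let a, b ∈ (0, ∞). If 9ab ≠ 4, then λ(a + b) = λ(a) + λ(b) if and only if (a − b)²(9ab − 4) = 4 + 8ab − 32a²b². In particular, whenever a, b > 0 satisfy λ(a + b) = λ(a) + λ(b), one has 4/9 ≤ ab ≤ 1/2. Moreover, for all a, b > 0: if ab > 1/2 then λ(a + b) − λ(a) − λ(b) > 0, and if ab < 4/9 then λ(a + b) − λ(a) − λ(b) < 0. -/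
/-!
Since `λ = lam ≥ 0`, the sign of `λ(a+b) - λ(a) - λ(b)` is that of
`λ(a+b)² - (λ(a) + λ(b))² = 3ab(a+b) - 2λ(a)λ(b)`; squaring once more, it is the sign of
`(3ab(a+b))² - 4(a+a³)(b+b³) = ab · P` with
`P = triadPoly a b = 9ab(a+b)² - 4(1+a²)(1+b²)`.
The two decompositions `P = (a-b)²(9ab-4) - 4(1+4ab)(1-2ab)` and
`P = (a+b)²(9ab-4) - 4(1-ab)²` show that `P > 0` when `ab > 1/2` and `P < 0` when `ab < 4/9`.
-/

noncomputable section

theorem sign_sub_eq_sign_sq_sub {α : Type*} [CommRing α] [LinearOrder α] [IsStrictOrderedRing α]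
    {x y : α} (hx : 0 ≤ x) (hy : 0 ≤ y) :
    SignType.sign (x - y) = SignType.sign (x ^ 2 - y ^ 2) := by
  rcases (add_nonneg hx hy).eq_or_lt with hxy | hxy
  · obtain ⟨rfl, rfl⟩ : x = 0 ∧ y = 0 := (add_eq_zero_iff_of_nonneg hx hy).1 hxy.symm
    simp
  · rw [sq_sub_sq, sign_mul, sign_pos hxy, one_mul]

theorem lam_nonneg (x : ℝ) : 0 ≤ lam x := Real.sqrt_nonneg _

theorem lam_sq {x : ℝ} (hx : 0 ≤ x) : lam x ^ 2 = x + x ^ 3 :=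
  Real.sq_sqrt (by positivity)

def triadPoly (a b : ℝ) : ℝ := 9 * (a * b) * (a + b) ^ 2 - 4 * ((1 + a ^ 2) * (1 + b ^ 2))

theorem triadPoly_eq_sub_mul_sub (a b : ℝ) :
    triadPoly a b = (a - b) ^ 2 * (9 * (a * b) - 4) - (4 + 8 * (a * b) - 32 * (a * b) ^ 2) := by
  unfold triadPoly; ring

theorem triadPoly_eq_add_mul_sub (a b : ℝ) :
    triadPoly a b = (a + b) ^ 2 * (9 * (a * b) - 4) - 4 * (1 - a * b) ^ 2 := by
  unfold triadPoly; ring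

theorem triadPoly_pos_of_half_lt_mul {a b : ℝ} (h : 1 / 2 < a * b) : 0 < triadPoly a b := by
  rw [triadPoly_eq_sub_mul_sub]
  have : 0 ≤ (a - b) ^ 2 * (9 * (a * b) - 4) := mul_nonneg (sq_nonneg _) (by linarith)
  nlinarith

theorem triadPoly_neg_of_mul_lt {a b : ℝ} (h : a * b < 4 / 9) : triadPoly a b < 0 := by
  rw [triadPoly_eq_add_mul_sub]
  have : (a + b) ^ 2 * (9 * (a * b) - 4) ≤ 0 :=
    mul_nonpos_of_nonneg_of_nonpos (sq_nonneg _) (by linarith)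
  have : 0 < (1 - a * b) ^ 2 := pow_pos (by linarith) 2
  linarith

theorem sign_lam_add_sub_sub {a b : ℝ} (ha : 0 < a) (hb : 0 < b) :
    SignType.sign (lam (a + b) - lam a - lam b) = SignType.sign (triadPoly a b) := by
  have hcross : 0 ≤ 2 * (lam a * lam b) := by
    have := lam_nonneg a; have := lam_nonneg b; positivity
  calc SignType.sign (lam (a + b) - lam a - lam b)
      = SignType.sign (lam (a + b) ^ 2 - (lam a + lam b) ^ 2) := by
        rw [sub_sub]
        exact sign_sub_eq_sign_sq_sub (lam_nonneg _) (add_nonneg (lam_nonneg a) (lam_nonneg b))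
    _ = SignType.sign (3 * a * b * (a + b) - 2 * (lam a * lam b)) := by
        congr 1
        linear_combination lam_sq (add_pos ha hb).le - lam_sq ha.le - lam_sq hb.le
    _ = SignType.sign ((3 * a * b * (a + b)) ^ 2 - (2 * (lam a * lam b)) ^ 2) :=
        sign_sub_eq_sign_sq_sub (by positivity) hcross
    _ = SignType.sign (a * b * triadPoly a b) := by
        congr 1
        unfold triadPoly
        linear_combination -4 * lam b ^ 2 * lam_sq ha.le - 4 * (a + a ^ 3) * lam_sq hb.le
    _ = SignType.sign (triadPoly a b) := by
        rw [sign_mul, sign_pos (mul_pos ha hb), one_mul]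

theorem lam_add_eq_iff_triadPoly_eq_zero {a b : ℝ} (ha : 0 < a) (hb : 0 < b) :
    lam (a + b) = lam a + lam b ↔ triadPoly a b = 0 := by
  rw [← sub_eq_zero, ← sub_sub, ← sign_eq_zero_iff, sign_lam_add_sub_sub ha hb, sign_eq_zero_iff]

/-- For a, b > 0 with 9ab ≠ 4: λ(a+b) = λ(a) + λ(b) iff (a−b)²(9ab−4) = 4 + 8ab − 32a²b²;
whenever λ(a+b) = λ(a) + λ(b) one has 4/9 ≤ ab ≤ 1/2; moreover if ab > 1/2 then
λ(a+b) − λ(a) − λ(b) > 0 and if ab < 4/9 then λ(a+b) − λ(a) − λ(b) < 0. -/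
theorem stmt7 (a b : ℝ) (ha : 0 < a) (hb : 0 < b) :
    (9 * (a * b) ≠ 4 →
      (lam (a + b) = lam a + lam b ↔
        (a - b) ^ 2 * (9 * (a * b) - 4) = 4 + 8 * (a * b) - 32 * (a * b) ^ 2)) ∧
    (lam (a + b) = lam a + lam b → 4 / 9 ≤ a * b ∧ a * b ≤ 1 / 2) ∧
    (1 / 2 < a * b → 0 < lam (a + b) - lam a - lam b) ∧
    (a * b < 4 / 9 → lam (a + b) - lam a - lam b < 0) := by
  refine ⟨fun _ => ?_, fun h => ?_, fun h => ?_, fun h => ?_⟩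
  · rw [lam_add_eq_iff_triadPoly_eq_zero ha hb, triadPoly_eq_sub_mul_sub, sub_eq_zero]
  · have hP := (lam_add_eq_iff_triadPoly_eq_zero ha hb).1 h
    exact ⟨le_of_not_gt fun h' => (triadPoly_neg_of_mul_lt h').ne hP,
      le_of_not_gt fun h' => (triadPoly_pos_of_half_lt_mul h').ne' hP⟩
  · rw [← sign_eq_one_iff, sign_lam_add_sub_sub ha hb, sign_eq_one_iff]
    exact triadPoly_pos_of_half_lt_mul h
  · rw [← sign_eq_neg_one_iff, sign_lam_add_sub_sub ha hb, sign_eq_neg_one_iff]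
    exact triadPoly_neg_of_mul_lt h

end
end
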